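/- Assume the Gauss periods η_a, 0 ≤ a ≤ N−1, take exactly three rational values α₁, α₂, α₃ forming an arithmetic progression, say α₁ − α₂ = −t < 0 and α₃ − α₂ = t > 0. Then t is a power of p, and with k = (q−1)/N: |I₁| = (N(α₂² + α₂t + k) + 2α₂ − k + t + 1)/(2t²), |I₃| = (N(α₂² − α₂t + k) + 2α₂ − k − t + 1)/(2t²), |I₂| = (N(t² − α₂² − k) − 1 − 2α₂ + k)/t², and |I₁| − |I₃| = (α₂N + 1)/t. Moreover, in ℚ[Z_N], (I₁ − I₃)(I₁ − I₃)^{(−1)} = (q/t²)·1 + ((α₂²N + 2α₂ − k)/t²)·Z_N. -/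

import Mathlib

/-!
Orthogonality of `ψ` gives `∑ₐ ηₐ = -1` and, the periods being rational hence real,
`∑ₐ ηₐ ηₐ₊ₛ = q·[s = 0] - k`: the product `ηₐ · conj ηₐ₊ₛ` is a sum of `ψ (x (1 - γ^(s+Nl)))`
in which `x` runs over `F^*`. Writing `ηₐ = α₂ - t g(a)` with `g = 1_{I₁} - 1_{I₃}`, the first
identity becomes `t (|I₁| - |I₃|) = α₂ N + 1` and the second
`t² ∑ₐ g(a) g(a+s) = q·[s = 0] + α₂² N + 2α₂ - k`, which is the group ring identity. Its case
`s = 0` computes `|I₁| + |I₃|`, and `|I₁| + |I₂| + |I₃| = N` gives the remaining size.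
Comparing `s = 0` with some `s ≠ 0` shows that `t²` divides `q = p^f`, so `t` is a power of `p`.
-/

open Finset

theorem Function.Periodic.sum_range_add {M : Type*} [AddCancelCommMonoid M] {f : ℕ → M} {k : ℕ}
    (hf : Function.Periodic f k) (j : ℕ) :
    ∑ l ∈ range k, f (j + l) = ∑ l ∈ range k, f l := by
  induction j with
  | zero => simp
  | succ j ih =>
    rw [← ih]
    have h := (sum_range_succ (fun l => f (j + l)) k).symm.trans
      (sum_range_succ' (fun l => f (j + l)) k)
    rw [add_zero, hf] at h
    simp_rw [add_right_comm j 1, add_assoc j]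
    exact (add_right_cancel h).symm

theorem sum_range_sum_range_add_mul {M : Type*} [AddCommMonoid M] (N k : ℕ) (G : ℕ → M) :
    ∑ a ∈ range N, ∑ j ∈ range k, G (a + N * j) = ∑ e ∈ range (N * k), G e := by
  rw [sum_comm, mul_comm, ← Fin.sum_univ_eq_sum_range G, ← finProdFinEquiv.sum_comp,
    Fintype.sum_prod_type]
  simp only [finProdFinEquiv_apply_val]
  rw [← Fin.sum_univ_eq_sum_range (fun j => ∑ a ∈ range N, G (a + N * j))]
  simp only [← Fin.sum_univ_eq_sum_range (fun a => G (a + N * _))]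

theorem ZMod.sum_comp_val {M : Type*} [AddCommMonoid M] {n : ℕ} [NeZero n] (φ : ℕ → M) :
    ∑ x : ZMod n, φ x.val = ∑ a ∈ range n, φ a :=
  sum_nbij' ZMod.val (↑) (fun x _ => mem_range.mpr x.val_lt) (fun _ _ => mem_univ _)
    (fun x _ => ZMod.natCast_zmod_val x) (fun _ ha => ZMod.val_cast_of_lt (mem_range.mp ha))
    (fun _ _ => rfl)

theorem AddChar.isPrimitive_zmodChar_comp_trace {p : ℕ} [Fact p.Prime] {F : Type*} [Field F]
    [Finite F] [Algebra (ZMod p) F] {C : Type*} [CommMonoid C] {ζ : C}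
    (hζ : IsPrimitiveRoot ζ p) :
    ((zmodChar p hζ.pow_eq_one).compAddMonoidHom
      (Algebra.trace (ZMod p) F).toAddMonoidHom).IsPrimitive := by
  refine IsPrimitive.of_ne_one (ne_one_iff.mpr ?_)
  obtain ⟨y, hy⟩ := Algebra.trace_surjective (ZMod p) F 1
  have hp : 1 < p := (Fact.out : p.Prime).one_lt
  refine ⟨y, ?_⟩
  simpa [hy, zmodChar_apply, ZMod.val_one_eq_one_mod, Nat.mod_eq_of_lt hp] using hζ.ne_one hp

theorem exists_ratCast_of_setOf_eq {N : ℕ} [NeZero N] {η : ℕ → ℂ} {a₁ a₂ a₃ : ℚ}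
    (h : {c : ℂ | ∃ a, a < N ∧ η a = c} = {(a₁ : ℂ), (a₂ : ℂ), (a₃ : ℂ)}) :
    ∃ v : ZMod N → ℚ, (∀ x, η x.val = v x) ∧ ∀ x, v x = a₁ ∨ v x = a₂ ∨ v x = a₃ := by
  have hx (x : ZMod N) : ∃ r : ℚ, η x.val = r ∧ (r = a₁ ∨ r = a₂ ∨ r = a₃) := by
    have hmem : η x.val ∈ {c : ℂ | ∃ a, a < N ∧ η a = c} := ⟨x.val, x.val_lt, rfl⟩
    rw [h] at hmem
    rcases hmem with h | h | h
    exacts [⟨_, h, Or.inl rfl⟩, ⟨_, h, Or.inr (Or.inl rfl)⟩, ⟨_, h, Or.inr (Or.inr rfl)⟩]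
  choose v hv hv_mem using hx
  exact ⟨v, hv, hv_mem⟩

section FiniteField

variable {F : Type*} [Field F] [Fintype F] {γ : F}

theorem sum_range_pow_eq_sum_erase_zero [DecidableEq F] {M : Type*} [AddCommMonoid M]
    (hγ : orderOf γ = Fintype.card F - 1) (G : F → M) :
    ∑ e ∈ range (Fintype.card F - 1), G (γ ^ e) = ∑ x ∈ univ.erase 0, G x := by
  have hγ0 : γ ≠ 0 := by
    rintro rfl
    have : 1 < Fintype.card F := Fintype.one_lt_card
    simp at hγ
    omega
  have hinj : Set.InjOn (γ ^ ·) (range (Fintype.card F - 1)) := by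
    rw [coe_range, ← hγ]
    exact pow_injOn_Iio_orderOf
  have himage : (range (Fintype.card F - 1)).image (γ ^ ·) = univ.erase 0 := by
    refine eq_of_subset_of_card_le (fun x hx => ?_) ?_
    · obtain ⟨e, -, rfl⟩ := mem_image.mp hx
      exact mem_erase.mpr ⟨pow_ne_zero e hγ0, mem_univ _⟩
    · rw [card_image_of_injOn hinj, card_erase_of_mem (mem_univ _), card_univ, card_range]
  rw [← himage, sum_image hinj]

theorem AddChar.sum_range_pow_mul [DecidableEq F] {R : Type*} [CommRing R] [IsDomain R]
    {ψ : AddChar F R} (hψ : ψ.IsPrimitive) (hγ : orderOf γ = Fintype.card F - 1) (c : F) :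
    ∑ e ∈ range (Fintype.card F - 1), ψ (γ ^ e * c)
      = (if c = 0 then (Fintype.card F : R) else 0) - 1 := by
  rw [sum_range_pow_eq_sum_erase_zero hγ (fun x => ψ (x * c)), ← Nat.cast_zero (R := R),
    ← Nat.cast_ite, ← sum_mulShift c hψ, ← add_sum_erase _ _ (mem_univ 0), zero_mul,
    map_zero_eq_one, add_sub_cancel_left]

/-- The Gauss period `η_a`: the subgroup `C₀` of `N`-th powers is enumerated as `γ ^ (N * j)`,
`j < (q - 1) / N`. -/
noncomputable def gaussPeriod {R : Type*} [CommRing R] (ψ : AddChar F R) (γ : F) (N a : ℕ) : R :=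
  ∑ j ∈ range ((Fintype.card F - 1) / N), ψ (γ ^ (a + N * j))

section GaussPeriod

variable {N : ℕ} (hγ : orderOf γ = Fintype.card F - 1) (hN : N ∣ Fintype.card F - 1)
include hγ hN

theorem periodic_pow_add_mul (b : ℕ) :
    Function.Periodic (fun j => γ ^ (b + N * j)) ((Fintype.card F - 1) / N) := fun j => by
  dsimp only
  rw [mul_add, ← add_assoc, pow_add _ _ (N * _), Nat.mul_div_cancel' hN, ← hγ,
    pow_orderOf_eq_one, mul_one]

variable {R : Type*} [CommRing R] (ψ : AddChar F R)

theorem gaussPeriod_periodic : Function.Periodic (gaussPeriod ψ γ N) N := fun a => by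
  have := ((periodic_pow_add_mul hγ hN a).comp ψ).sum_range_add 1
  refine Eq.trans (sum_congr rfl fun j _ => ?_) this
  simp only [Function.comp_apply]
  ring_nf

theorem sum_gaussPeriod [IsDomain R] (hψ : ψ.IsPrimitive) :
    ∑ a ∈ range N, gaussPeriod ψ γ N a = -1 := by
  classical
  unfold gaussPeriod
  rw [sum_range_sum_range_add_mul (G := fun e => ψ (γ ^ e)), Nat.mul_div_cancel' hN]
  simpa using ψ.sum_range_pow_mul hψ hγ 1

theorem pow_add_mul_eq_one_iff {s l : ℕ} (hs : s < N) (hl : l < (Fintype.card F - 1) / N) :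
    γ ^ (s + N * l) = 1 ↔ s = 0 ∧ l = 0 := by
  refine ⟨fun h => ?_, by rintro ⟨rfl, rfl⟩; simp⟩
  have hlt : s + N * l < orderOf γ := by
    rw [hγ, ← Nat.mul_div_cancel' hN]
    nlinarith
  have := Nat.eq_zero_of_dvd_of_lt (orderOf_dvd_of_pow_eq_one h) hlt
  simpa [show N ≠ 0 by omega] using this

open ComplexConjugate

/-- Shifting `l ↦ j + l` in the second period turns `ψ (x - y)` into
`ψ (x * (1 - γ ^ (s + N * l)))` with `x = γ ^ (a + N * j)`. -/
theorem gaussPeriod_mul_conj {K : Type*} [RCLike K] (ψ : AddChar F K) (a s : ℕ) :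
    gaussPeriod ψ γ N a * conj (gaussPeriod ψ γ N (a + s))
      = ∑ j ∈ range ((Fintype.card F - 1) / N), ∑ l ∈ range ((Fintype.card F - 1) / N),
          ψ (γ ^ (a + N * j) * (1 - γ ^ (s + N * l))) := by
  simp only [gaussPeriod, map_sum, sum_mul_sum, ← AddChar.map_neg_eq_conj,
    ← AddChar.map_add_eq_mul]
  refine sum_congr rfl fun j _ => ?_
  have hshift := ((periodic_pow_add_mul hγ hN (a + s)).comp
    fun y => ψ (γ ^ (a + N * j) + -y)).sum_range_add j
  refine hshift.symm.trans (sum_congr rfl fun l _ => ?_)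
  simp only [Function.comp_apply]
  rw [show a + s + N * (j + l) = (a + N * j) + (s + N * l) by ring, pow_add]
  ring_nf

theorem sum_gaussPeriod_mul_conj {K : Type*} [RCLike K] {ψ : AddChar F K} (hψ : ψ.IsPrimitive)
    {s : ℕ} (hs : s < N) :
    ∑ a ∈ range N, gaussPeriod ψ γ N a * conj (gaussPeriod ψ γ N (a + s))
      = (if s = 0 then (Fintype.card F : K) else 0) - ((Fintype.card F - 1) / N : ℕ) := by
  classical
  set k := (Fintype.card F - 1) / N
  have hk : N * k = Fintype.card F - 1 := Nat.mul_div_cancel' hN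
  have hk0 : 0 < k :=
    Nat.div_pos (Nat.le_of_dvd (by have := Fintype.one_lt_card (α := F); omega) hN) (by omega)
  calc ∑ a ∈ range N, gaussPeriod ψ γ N a * conj (gaussPeriod ψ γ N (a + s))
      = ∑ l ∈ range k, ∑ e ∈ range (Fintype.card F - 1), ψ (γ ^ e * (1 - γ ^ (s + N * l))) := by
        refine (sum_congr rfl fun a _ => (gaussPeriod_mul_conj hγ hN ψ a s).trans sum_comm).trans
          (sum_comm.trans (sum_congr rfl fun l _ => ?_))
        exact (sum_range_sum_range_add_mul N k fun e => ψ (γ ^ e * (1 - γ ^ (s + N * l)))).trans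
          (by rw [hk])
    _ = ∑ l ∈ range k, ((if s = 0 ∧ l = 0 then (Fintype.card F : K) else 0) - 1) :=
        sum_congr rfl fun l hl => by
          simp only [ψ.sum_range_pow_mul hψ hγ, sub_eq_zero, eq_comm (a := (1 : F)),
            pow_add_mul_eq_one_iff hγ hN hs (mem_range.mp hl)]
    _ = _ := by
        rw [sum_sub_distrib, sum_const, card_range, nsmul_one]
        by_cases hs0 : s = 0 <;> simp [hs0, hk0]

theorem gaussPeriod_rat_moments [NeZero N] {ψ : AddChar F ℂ} (hψ : ψ.IsPrimitive)
    {v : ZMod N → ℚ} (hv : ∀ x : ZMod N, gaussPeriod ψ γ N x.val = v x) :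
    ∑ x, v x = -1 ∧ ∀ s, ∑ x, v x * v (x + s)
      = (if s = 0 then (Fintype.card F : ℚ) else 0) - ((Fintype.card F : ℚ) - 1) / N := by
  refine ⟨Rat.cast_injective (α := ℂ) ?_, fun s => Rat.cast_injective (α := ℂ) ?_⟩
  · push_cast
    simp_rw [← hv]
    rw [ZMod.sum_comp_val (fun a => gaussPeriod ψ γ N a), sum_gaussPeriod hγ hN ψ hψ]
  · have hshift (x : ZMod N) :
        gaussPeriod ψ γ N (x + s).val = gaussPeriod ψ γ N (x.val + s.val) := by
      rw [ZMod.val_add, (gaussPeriod_periodic hγ hN ψ).map_mod_nat]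
    have hk : (((Fintype.card F - 1) / N : ℕ) : ℂ) = ((Fintype.card F : ℂ) - 1) / N := by
      rw [Nat.cast_div hN (by simp [NeZero.ne N]), Nat.cast_pred Fintype.card_pos]
    push_cast
    calc ∑ x, (v x : ℂ) * v (x + s)
        = ∑ x : ZMod N, gaussPeriod ψ γ N x.val * conj (gaussPeriod ψ γ N (x.val + s.val)) := by
          simp_rw [← hshift, hv, map_ratCast]
      _ = _ := by
          rw [ZMod.sum_comp_val
              (fun a => gaussPeriod ψ γ N a * conj (gaussPeriod ψ γ N (a + s.val))),
            sum_gaussPeriod_mul_conj hγ hN hψ s.val_lt, hk]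
          simp [ZMod.val_eq_zero, apply_ite (Rat.cast (K := ℂ))]

end GaussPeriod

end FiniteField

namespace AddMonoidAlgebra

variable {R G : Type*} [AddCommGroup G] [Fintype G]

theorem sum_single_mul_sum_single_neg [CommSemiring R] (g : G → R) :
    (∑ a, single a (g a)) * (∑ b, single (-b) (g b)) = ∑ s, single s (∑ b, g b * g (b + s)) := by
  simp_rw [sum_mul_sum, single_mul_single]
  rw [sum_comm]
  calc _ = ∑ b, ∑ s, single s (g b * g (b + s)) := sum_congr rfl fun b _ =>
        Fintype.sum_equiv (Equiv.addRight (-b)) _ _ fun a => by simp [mul_comm]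
    _ = _ := by
        rw [sum_comm]
        exact sum_congr rfl fun s _ => (map_sum (singleAddHom s) _ _).symm

theorem mul_sum_single_neg_eq_of_autocorrelation [DecidableEq G] {g : G → ℚ} {t q c : ℚ}
    (ht : t ≠ 0) (h : ∀ s, t ^ 2 * ∑ x, g x * g (x + s) = (if s = 0 then q else 0) + c) :
    (∑ a, single a (g a)) * (∑ b, single (-b) (g b))
      = (q / t ^ 2) • (1 : AddMonoidAlgebra ℚ G) + (c / t ^ 2) • ∑ s, single s 1 := by
  have hcoeff (s : G) : ∑ b, g b * g (b + s) = (if s = 0 then q / t ^ 2 else 0) + c / t ^ 2 := by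
    have := h s
    split_ifs at this ⊢ <;> field_simp <;> linear_combination this
  rw [sum_single_mul_sum_single_neg, one_def, smul_single', smul_sum]
  simp_rw [smul_single', mul_one, hcoeff, single_add, sum_add_distrib, apply_ite (single _),
    single_zero, sum_ite_eq']
  simp

end AddMonoidAlgebra

section SignedIndicator

variable {G : Type*} [DecidableEq G]

def signedIndicator (A B : Finset G) (x : G) : ℤ :=
  (if x ∈ A then 1 else 0) - if x ∈ B then 1 else 0

variable [Fintype G] (A B : Finset G)

theorem sum_signedIndicator : ∑ x, (signedIndicator A B x : ℚ) = A.card - B.card := by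
  simp [signedIndicator, sum_sub_distrib]

theorem sum_signedIndicator_sq (h : Disjoint A B) :
    ∑ x, (signedIndicator A B x : ℚ) ^ 2 = A.card + B.card := by
  have hpt (x : G) : (signedIndicator A B x : ℚ) ^ 2
      = (if x ∈ A then 1 else 0) + if x ∈ B then 1 else 0 := by
    by_cases hA : x ∈ A
    · simp [signedIndicator, hA, disjoint_left.mp h hA]
    · by_cases hB : x ∈ B <;> simp [signedIndicator, hA, hB]
  simp [hpt, sum_add_distrib]

theorem AddMonoidAlgebra.sum_single_sub_sum_single {R : Type*} [Ring R] (φ : G → G) :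
    ∑ a ∈ A, single (φ a) (1 : R) - ∑ a ∈ B, single (φ a) 1
      = ∑ a, single (φ a) (signedIndicator A B a : R) := by
  simp_rw [signedIndicator, Int.cast_sub, Int.cast_ite, Int.cast_one, Int.cast_zero, single_sub,
    sum_sub_distrib, apply_ite (single _), single_zero, sum_ite_mem, univ_inter]

theorem exists_int_eq_sq_mul [AddGroup G] [Nontrivial G] {g : G → ℤ} {t q c : ℚ}
    (h : ∀ s, t ^ 2 * ∑ x, (g x : ℚ) * g (x + s) = (if s = 0 then q else 0) + c) :
    ∃ m : ℤ, q = t ^ 2 * m := by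
  obtain ⟨s, hs⟩ := exists_ne (0 : G)
  refine ⟨∑ x, g x * g x - ∑ x, g x * g (x + s), ?_⟩
  have h0 := h 0
  have h1 := h s
  rw [if_pos rfl] at h0
  rw [if_neg hs] at h1
  simp only [add_zero] at h0
  push_cast
  linear_combination h1 - h0

end SignedIndicator

section AffineMoments

variable {G : Type*} [Fintype G] {g : G → ℚ} {α t : ℚ}

theorem mul_sum_eq_of_sum_sub_mul (h : ∑ x, (α - t * g x) = -1) :
    t * ∑ x, g x = Fintype.card G * α + 1 := by
  rw [sum_sub_distrib, ← mul_sum, sum_const, card_univ, nsmul_eq_mul] at h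
  linarith

theorem sq_mul_sum_mul_add_eq [AddCommGroup G] (hsum : ∑ x, (α - t * g x) = -1) {s : G} {c : ℚ}
    (hcorr : ∑ x, (α - t * g x) * (α - t * g (x + s)) = c) :
    t ^ 2 * ∑ x, g x * g (x + s) = c + Fintype.card G * α ^ 2 + 2 * α := by
  have hshift : ∑ x, g (x + s) = ∑ x, g x :=
    Fintype.sum_equiv (Equiv.addRight s) _ _ fun _ => rfl
  have hexpand (x : G) : (α - t * g x) * (α - t * g (x + s))
      = α ^ 2 - α * t * g (x + s) - α * t * g x + t ^ 2 * (g x * g (x + s)) := by ring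
  simp_rw [hexpand, sum_add_distrib, sum_sub_distrib, ← mul_sum, hshift, sum_const, card_univ,
    nsmul_eq_mul] at hcorr
  linear_combination hcorr + 2 * α * mul_sum_eq_of_sum_sub_mul hsum

end AffineMoments

section ThreeValued

variable {G : Type*} {v : G → ℚ} {α t : ℚ} {I₁ I₂ I₃ : Finset G}
  (ht : t ≠ 0) (hI₁ : ∀ x, x ∈ I₁ ↔ v x = α - t) (hI₂ : ∀ x, x ∈ I₂ ↔ v x = α)
  (hI₃ : ∀ x, x ∈ I₃ ↔ v x = α + t) (hv : ∀ x, v x = α - t ∨ v x = α ∨ v x = α + t)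
include ht hI₁ hI₂ hI₃ hv

theorem mem_trichotomy (x : G) :
    x ∈ I₁ ∧ x ∉ I₂ ∧ x ∉ I₃ ∧ v x = α - t ∨ x ∉ I₁ ∧ x ∈ I₂ ∧ x ∉ I₃ ∧ v x = α ∨
      x ∉ I₁ ∧ x ∉ I₂ ∧ x ∈ I₃ ∧ v x = α + t := by
  have h₁₂ : α - t ≠ α := by simpa using ht
  have h₃₂ : α + t ≠ α := by simpa using ht
  have h₁₃ : α - t ≠ α + t := fun h => ht (by linarith)
  rcases hv x with h | h | h <;>
    simp [hI₁, hI₂, hI₃, h, h₁₂, h₁₂.symm, h₃₂, h₃₂.symm, h₁₃, h₁₃.symm]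

theorem disjoint_of_mem_iff : Disjoint I₁ I₃ :=
  disjoint_left.mpr fun x h₁ h₃ => by
    rcases mem_trichotomy ht hI₁ hI₂ hI₃ hv x with ⟨-, -, h₃', -⟩ | ⟨h₁', -⟩ | ⟨h₁', -⟩
    exacts [h₃' h₃, h₁' h₁, h₁' h₁]

variable [DecidableEq G]

theorem eq_sub_mul_signedIndicator (x : G) : v x = α - t * signedIndicator I₁ I₃ x := by
  rcases mem_trichotomy ht hI₁ hI₂ hI₃ hv x with h | h | h <;> simp [signedIndicator, h]

variable [Fintype G]

theorem card_add_card_add_card : I₁.card + I₂.card + I₃.card = Fintype.card G := by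
  calc I₁.card + I₂.card + I₃.card
      = ∑ x, ((if x ∈ I₁ then 1 else 0) + (if x ∈ I₂ then 1 else 0)
          + if x ∈ I₃ then 1 else 0) := by
        simp [sum_add_distrib]
    _ = ∑ _x : G, 1 := sum_congr rfl fun x _ => by
        rcases mem_trichotomy ht hI₁ hI₂ hI₃ hv x with h | h | h <;> simp [h]
    _ = Fintype.card G := by simp

theorem mul_card_sub_card (hsum : ∑ x, v x = -1) :
    t * ((I₁.card : ℚ) - I₃.card) = Fintype.card G * α + 1 := by
  simp_rw [eq_sub_mul_signedIndicator ht hI₁ hI₂ hI₃ hv] at hsum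
  rw [← sum_signedIndicator, mul_sum_eq_of_sum_sub_mul hsum]

variable [AddCommGroup G] {q k : ℚ} (hsum : ∑ x, v x = -1)
  (hcorr : ∀ s, ∑ x, v x * v (x + s) = (if s = 0 then q else 0) - k)
include hsum hcorr

theorem sq_mul_autocorrelation_signedIndicator (s : G) :
    t ^ 2 * ∑ x, (signedIndicator I₁ I₃ x : ℚ) * signedIndicator I₁ I₃ (x + s)
      = (if s = 0 then q else 0) + (α ^ 2 * Fintype.card G + 2 * α - k) := by
  simp_rw [eq_sub_mul_signedIndicator ht hI₁ hI₂ hI₃ hv] at hsum hcorr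
  rw [sq_mul_sum_mul_add_eq hsum (hcorr s)]
  ring

theorem card_eq_of_moments (hq : q = Fintype.card G * k + 1) :
    (I₁.card : ℚ)
        = ((Fintype.card G : ℚ) * (α ^ 2 + α * t + k) + 2 * α - k + t + 1) / (2 * t ^ 2)
    ∧ (I₃.card : ℚ)
        = ((Fintype.card G : ℚ) * (α ^ 2 - α * t + k) + 2 * α - k - t + 1) / (2 * t ^ 2)
    ∧ (I₂.card : ℚ)
        = ((Fintype.card G : ℚ) * (t ^ 2 - α ^ 2 - k) - 1 - 2 * α + k) / t ^ 2
    ∧ (I₁.card : ℚ) - (I₃.card : ℚ) = (α * Fintype.card G + 1) / t := by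
  have hdiff := mul_card_sub_card ht hI₁ hI₂ hI₃ hv hsum
  have hsum_sq := sq_mul_autocorrelation_signedIndicator ht hI₁ hI₂ hI₃ hv hsum hcorr 0
  simp only [add_zero, ← sq, if_pos, sum_signedIndicator_sq _ _
    (disjoint_of_mem_iff ht hI₁ hI₂ hI₃ hv)] at hsum_sq
  have htotal : (I₁.card : ℚ) + I₂.card + I₃.card = Fintype.card G := by
    exact_mod_cast card_add_card_add_card ht hI₁ hI₂ hI₃ hv
  have ht2 : t ^ 2 ≠ 0 := pow_ne_zero 2 ht
  refine ⟨?_, ?_, ?_, ?_⟩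
  · rw [eq_div_iff (by positivity)]
    linear_combination hsum_sq + t * hdiff + hq
  · rw [eq_div_iff (by positivity)]
    linear_combination hsum_sq - t * hdiff + hq
  · rw [eq_div_iff ht2]
    linear_combination t ^ 2 * htotal - hsum_sq - hq
  · rw [eq_div_iff ht]
    linear_combination hdiff

end ThreeValued

theorem stmt_3_general
    (p f N q : ℕ) [Fact p.Prime] (hq : q = p ^ f)
    (hN : 2 < N) [NeZero N] (hNq : N ∣ q - 1)
    (F : Type) [Field F] [Fintype F] [Algebra (ZMod p) F]
    (hcard : Fintype.card F = q)
    (γ : F) (hγ : orderOf γ = q - 1)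
    (ζ : ℂ) (hζ : IsPrimitiveRoot ζ p)
    (ψ : F → ℂ) (hψ : ∀ x, ψ x = ζ ^ (Algebra.trace (ZMod p) F x).val)
    (η : ℕ → ℂ)
    (hη : ∀ a, η a = ∑ j ∈ Finset.range ((q - 1) / N), ψ (γ ^ (a + N * j)))
    (α₁ α₂ α₃ : ℚ)
    (hval : {c : ℂ | ∃ a, a < N ∧ η a = c} = {(α₁ : ℂ), (α₂ : ℂ), (α₃ : ℂ)})
    (I₁ I₂ I₃ : Finset (ZMod N))
    (hI₁ : ∀ x : ZMod N, x ∈ I₁ ↔ η x.val = (α₁ : ℂ))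
    (hI₂ : ∀ x : ZMod N, x ∈ I₂ ↔ η x.val = (α₂ : ℂ))
    (hI₃ : ∀ x : ZMod N, x ∈ I₃ ↔ η x.val = (α₃ : ℂ))
    -- the three values form an arithmetic progression with common difference t > 0
    (t : ℕ) (ht : 0 < t)
    (hα12 : α₁ - α₂ = -(t : ℚ)) (hα32 : α₃ - α₂ = (t : ℚ))
    (k : ℚ) (hk : k = ((q : ℚ) - 1) / N) :
    (∃ θ : ℕ, t = p ^ θ)
    ∧ (I₁.card : ℚ)
        = ((N : ℚ) * (α₂ ^ 2 + α₂ * t + k) + 2 * α₂ - k + t + 1) / (2 * (t : ℚ) ^ 2)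
    ∧ (I₃.card : ℚ)
        = ((N : ℚ) * (α₂ ^ 2 - α₂ * t + k) + 2 * α₂ - k - t + 1) / (2 * (t : ℚ) ^ 2)
    ∧ (I₂.card : ℚ)
        = ((N : ℚ) * ((t : ℚ) ^ 2 - α₂ ^ 2 - k) - 1 - 2 * α₂ + k) / (t : ℚ) ^ 2
    ∧ (I₁.card : ℚ) - (I₃.card : ℚ) = (α₂ * N + 1) / t
    ∧ ((∑ a ∈ I₁, AddMonoidAlgebra.single a (1 : ℚ))
          - (∑ a ∈ I₃, AddMonoidAlgebra.single a (1 : ℚ)))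
      * ((∑ a ∈ I₁, AddMonoidAlgebra.single (-a) (1 : ℚ))
          - (∑ a ∈ I₃, AddMonoidAlgebra.single (-a) (1 : ℚ)))
      = ((q : ℚ) / (t : ℚ) ^ 2) • (1 : AddMonoidAlgebra ℚ (ZMod N))
        + ((α₂ ^ 2 * N + 2 * α₂ - k) / (t : ℚ) ^ 2)
            • ∑ g : ZMod N, AddMonoidAlgebra.single g (1 : ℚ) := by
  subst hcard
  obtain rfl : α₁ = α₂ - t := by linarith
  obtain rfl : α₃ = α₂ + t := by linarith
  obtain ⟨v, hv, hv_mem⟩ := exists_ratCast_of_setOf_eq hval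
  simp only [hv, Rat.cast_inj] at hI₁ hI₂ hI₃
  obtain ⟨hsum, hcorr⟩ := gaussPeriod_rat_moments hγ hNq
    (AddChar.isPrimitive_zmodChar_comp_trace hζ) fun x => by
      rw [← hv, hη, gaussPeriod]
      simp only [hψ]
      -- the composite character evaluates to `ζ ^ (trace x).val` by definition
      rfl
  rw [← hk] at hcorr
  have ht' : (t : ℚ) ≠ 0 := by positivity
  have hq' : (Fintype.card F : ℚ) = N * k + 1 := by
    rw [hk]; field_simp; ring
  have hquad := sq_mul_autocorrelation_signedIndicator ht' hI₁ hI₂ hI₃ hv_mem hsum hcorr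
  have : Fact (1 < N) := ⟨by omega⟩
  obtain ⟨m, hm⟩ := exists_int_eq_sq_mul hquad
  have htq : t ∣ p ^ f := by
    rw [← hq, ← Int.natCast_dvd_natCast]
    exact ⟨t * m, by rw [← mul_assoc, ← sq]; exact_mod_cast hm⟩
  obtain ⟨h₁, h₃, h₂, hd⟩ :=
    card_eq_of_moments ht' hI₁ hI₂ hI₃ hv_mem hsum hcorr (by rwa [ZMod.card])
  rw [ZMod.card] at h₁ h₃ h₂ hd hquad
  refine ⟨?_, h₁, h₃, h₂, hd, ?_⟩
  · obtain ⟨θ, -, hθ⟩ := (Nat.dvd_prime_pow Fact.out).mp htq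
    exact ⟨θ, hθ⟩
  · rw [AddMonoidAlgebra.sum_single_sub_sum_single, AddMonoidAlgebra.sum_single_sub_sum_single]
    exact AddMonoidAlgebra.mul_sum_single_neg_eq_of_autocorrelation ht' hquad

/-- Lemma 2.6 / `AP_size`.  If the Gauss periods of order `N` of `F_q`
take exactly three rational values in arithmetic progression `α₂ - t, α₂, α₂ + t`
(`t > 0`), then `t` is a power of `p`, the sizes of the index sets are given by the
stated formulas, and `(I₁-I₃)(I₁-I₃)⁽⁻¹⁾ = (q/t²)·1 + ((α₂²N+2α₂-k)/t²)·Z_N`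
in `ℚ[Z_N]`. -/
theorem stmt_3
    (p f N q : ℕ) [Fact p.Prime] (hf : 0 < f) (hq : q = p ^ f)
    (hN : 2 < N) [NeZero N] (hNq : N ∣ q - 1)
    (F : Type) [Field F] [Fintype F] [Algebra (ZMod p) F]
    (hcard : Fintype.card F = q)
    (γ : F) (hγ : orderOf γ = q - 1)
    (ζ : ℂ) (hζ : IsPrimitiveRoot ζ p)
    (ψ : F → ℂ) (hψ : ∀ x, ψ x = ζ ^ (Algebra.trace (ZMod p) F x).val)
    (η : ℕ → ℂ)
    (hη : ∀ a, η a = ∑ j ∈ Finset.range ((q - 1) / N), ψ (γ ^ (a + N * j)))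
    (α₁ α₂ α₃ : ℚ)
    (h12 : α₁ ≠ α₂) (h13 : α₁ ≠ α₃) (h23 : α₂ ≠ α₃)
    (hval : {c : ℂ | ∃ a, a < N ∧ η a = c} = {(α₁ : ℂ), (α₂ : ℂ), (α₃ : ℂ)})
    (I₁ I₂ I₃ : Finset (ZMod N))
    (hI₁ : ∀ x : ZMod N, x ∈ I₁ ↔ η x.val = (α₁ : ℂ))
    (hI₂ : ∀ x : ZMod N, x ∈ I₂ ↔ η x.val = (α₂ : ℂ))
    (hI₃ : ∀ x : ZMod N, x ∈ I₃ ↔ η x.val = (α₃ : ℂ))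
    -- the three values form an arithmetic progression with common difference t > 0
    (t : ℕ) (ht : 0 < t)
    (hα12 : α₁ - α₂ = -(t : ℚ)) (hα32 : α₃ - α₂ = (t : ℚ))
    (k : ℚ) (hk : k = ((q : ℚ) - 1) / N) :
    (∃ θ : ℕ, t = p ^ θ)
    ∧ (I₁.card : ℚ)
        = ((N : ℚ) * (α₂ ^ 2 + α₂ * t + k) + 2 * α₂ - k + t + 1) / (2 * (t : ℚ) ^ 2)
    ∧ (I₃.card : ℚ)
        = ((N : ℚ) * (α₂ ^ 2 - α₂ * t + k) + 2 * α₂ - k - t + 1) / (2 * (t : ℚ) ^ 2)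
    ∧ (I₂.card : ℚ)
        = ((N : ℚ) * ((t : ℚ) ^ 2 - α₂ ^ 2 - k) - 1 - 2 * α₂ + k) / (t : ℚ) ^ 2
    ∧ (I₁.card : ℚ) - (I₃.card : ℚ) = (α₂ * N + 1) / t
    ∧ ((∑ a ∈ I₁, AddMonoidAlgebra.single a (1 : ℚ))
          - (∑ a ∈ I₃, AddMonoidAlgebra.single a (1 : ℚ)))
      * ((∑ a ∈ I₁, AddMonoidAlgebra.single (-a) (1 : ℚ))
          - (∑ a ∈ I₃, AddMonoidAlgebra.single (-a) (1 : ℚ)))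
      = ((q : ℚ) / (t : ℚ) ^ 2) • (1 : AddMonoidAlgebra ℚ (ZMod N))
        + ((α₂ ^ 2 * N + 2 * α₂ - k) / (t : ℚ) ^ 2)
            • ∑ g : ZMod N, AddMonoidAlgebra.single g (1 : ℚ) :=
  stmt_3_general p f N q hq hN hNq F hcard γ hγ ζ hζ ψ hψ η hη α₁ α₂ α₃ hval I₁ I₂ I₃ hI₁ hI₂ hI₃ t
    ht hα12 hα32 k hk
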